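/- arXiv:1608.00384 — 7 statements merged into one kernel-verified Lean document; each statement's English description precedes it below -/
import Mathlib

section
/- Let K be a field of characteristic 0 and let E be a finitely generated module over the polynomial ring K[u]. Suppose there is an additive map ∇ : E → E satisfying the Leibniz rule ∇(f·e) = f·∇(e) + f′·e for all f ∈ K[u] and e ∈ E, where f′ denotes the formal derivative of f. Then the torsion submodule of E is zero and E is a free K[u]-module. -/
/-!
The torsion submodule `T` of `E` is stable under `∇`: if `f • e = 0` then
`f • ∇ e = -(f' • e)`, so `f² • ∇ e = 0`. Applying the Leibniz rule to `g • t = 0` then shows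
that the annihilator of `T` is an ideal of `K[u]` closed under differentiation. It is nonzero,
since `T` is finitely generated and torsion, so its generator `g` divides `g'`; in characteristic
zero this forces `g` to be a nonzero constant. Hence `T = 0`, and a finitely generated
torsion-free module over the PID `K[u]` is free.
-/

open Polynomial Submodule

section Connection

variable {R E : Type*} [CommRing R] [AddCommGroup E] [Module R E] {δ : R → R} {D : E →+ E}

theorem Submodule.map_mem_torsion_of_leibniz
    (hD : ∀ (f : R) (e : E), D (f • e) = f • D e + δ f • e) {e : E} (he : e ∈ torsion R E) :
    D e ∈ torsion R E := by
  obtain ⟨⟨f, hf⟩, hfe⟩ := he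
  replace hfe : f • e = 0 := hfe
  have hf_smul : f • D e = -(δ f • e) := by
    rw [eq_neg_iff_add_eq_zero, ← hD, hfe, map_zero]
  refine ⟨⟨f * f, mul_mem hf hf⟩, ?_⟩
  change (f * f) • D e = 0
  rw [mul_smul, hf_smul, smul_neg, smul_comm, hfe, smul_zero, neg_zero]

theorem Submodule.leibniz_mem_annihilator
    (hD : ∀ (f : R) (e : E), D (f • e) = f • D e + δ f • e) {N : Submodule R E}
    (hN : ∀ e ∈ N, D e ∈ N) {g : R} (hg : g ∈ N.annihilator) : δ g ∈ N.annihilator := by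
  rw [mem_annihilator] at hg ⊢
  intro e he
  have h := hD g e
  rwa [hg e he, hg (D e) (hN e he), map_zero, zero_add, eq_comm] at h

end Connection

theorem Submodule.annihilator_torsion_ne_bot {R E : Type*} [CommRing R] [IsDomain R]
    [IsNoetherianRing R] [AddCommGroup E] [Module R E] [Module.Finite R E] :
    (torsion R E).annihilator ≠ ⊥ := by
  obtain ⟨r, hr, hr_nzd⟩ :=
    annihilator_top_inter_nonZeroDivisors (torsion_isTorsion (R := R) (M := E))
  rw [SetLike.mem_coe, annihilator_top] at hr
  exact fun h ↦ nonZeroDivisors.ne_zero hr_nzd ((Submodule.mem_bot R).mp (h ▸ hr))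

theorem Polynomial.ideal_eq_top_of_derivative_mem {K : Type*} [Field K] [CharZero K]
    {I : Ideal K[X]} (hI : I ≠ ⊥) (hder : ∀ g ∈ I, derivative g ∈ I) : I = ⊤ := by
  obtain ⟨g, rfl⟩ := Submodule.IsPrincipal.principal I
  have hg : g ≠ 0 := fun h ↦ hI (by rw [h, Ideal.submodule_span_eq, Ideal.span_singleton_eq_bot])
  have hdvd : g ∣ derivative g :=
    Ideal.mem_span_singleton.mp (hder g (Ideal.subset_span rfl))
  obtain ⟨c, rfl⟩ := natDegree_eq_zero.mp
    (derivative_eq_zero.mp (dvd_derivative_iff.mp hdvd))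
  rw [Ideal.submodule_span_eq, Ideal.span_singleton_eq_top]
  exact isUnit_C.mpr (isUnit_iff_ne_zero.mpr (by rintro rfl; exact hg C_0))

/-- Let `K` be a field of characteristic `0` and `E` a finitely generated
module over the polynomial ring `K[u]`. If there is an additive map `D : E → E` satisfying
the Leibniz rule `D (f • e) = f • D e + f' • e` (where `f'` is the formal derivative),
then the torsion submodule of `E` is zero and `E` is a free `K[u]`-module. -/
theorem stmt0 (K : Type*) [Field K] [CharZero K]
    (E : Type*) [AddCommGroup E] [Module (Polynomial K) E]
    [Module.Finite (Polynomial K) E]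
    (D : E →+ E)
    (hD : ∀ (f : Polynomial K) (e : E),
      D (f • e) = f • D e + (Polynomial.derivative f) • e) :
    Submodule.torsion (Polynomial K) E = ⊥ ∧ Module.Free (Polynomial K) E := by
  have hT : torsion K[X] E = ⊥ := by
    rw [← annihilator_eq_top_iff]
    exact ideal_eq_top_of_derivative_mem annihilator_torsion_ne_bot fun g ↦
      leibniz_mem_annihilator hD fun e ↦ map_mem_torsion_of_leibniz hD
  have : Module.IsTorsionFree K[X] E := isTorsionFree_iff_torsion_eq_bot.mpr hT
  exact ⟨hT, inferInstance⟩
end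

section
/- Let A be a commutative ring containing ℚ and let H be an n×n matrix over the formal power series ring A[[x]] whose constant term H₀ := H(0) is a nilpotent matrix over A. Then there exists a unique n×n matrix U over A[[x]] with constant term equal to the identity matrix such that x·U′ + H·U = U·H₀, where U′ denotes the entrywise formal derivative of U. Moreover U is invertible in the ring of n×n matrices over A[[x]]. -/
/-!
Write `U = ∑ Uₖ xᵏ` and `H = ∑ Hₖ xᵏ`. The coefficient of `xᵏ` in `x U' + H U = U H₀` is
`k Uₖ + [H₀, Uₖ] + ∑_{j<k} H_{k-j} U_j = 0`. As `H₀` is nilpotent, so is `ad H₀`, and `k` is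
invertible in a `ℚ`-algebra; hence `k + ad H₀` is invertible for `k ≥ 1` and the `Uₖ` are
determined recursively from `U₀ = 1`. Any solution is invertible because `det U` has constant
term `det 1 = 1`.
-/

open PowerSeries Finset

theorem Finset.Nat.sum_antidiagonal_eq_add_sum_range {M : Type*} [AddCommMonoid M]
    (f : ℕ → ℕ → M) (k : ℕ) :
    ∑ p ∈ antidiagonal k, f p.1 p.2 = f 0 k + ∑ j ∈ range k, f (k - j) j := by
  rw [← Finset.Nat.sum_antidiagonal_swap]
  simp only [Prod.fst_swap, Prod.snd_swap]
  rw [Finset.Nat.sum_antidiagonal_eq_sum_range_succ (fun i j => f j i), sum_range_succ,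
    Nat.sub_self, add_comm]

theorem PowerSeries.coeff_X_mul_derivative {R : Type*} [CommSemiring R] (f : R⟦X⟧) (k : ℕ) :
    coeff k (X * derivative R f) = k * coeff k f := by
  rcases k with _ | k
  · simp
  · rw [coeff_succ_X_mul, coeff_derivative, mul_comm]
    push_cast
    rfl

namespace Matrix

variable {R : Type*} [CommSemiring R] {m : Type*}

theorem ext_iff_map_coeff {V W : Matrix m m R⟦X⟧} :
    V = W ↔ ∀ k, V.map (coeff k) = W.map (coeff k) :=
  ⟨fun h _ => h ▸ rfl, fun h => ext fun i j => PowerSeries.ext fun k => congr_fun₂ (h k) i j⟩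

theorem map_coeff_map_X_mul_derivative (V : Matrix m m R⟦X⟧) (k : ℕ) :
    (V.map fun f => X * derivative R f).map (coeff k) = k • V.map (coeff k) := by
  ext i j
  simp only [map_apply, coeff_X_mul_derivative, smul_apply, nsmul_eq_mul]

theorem map_coeff_zero (V : Matrix m m R⟦X⟧) : V.map (coeff 0) = V.map constantCoeff := by
  simp only [coeff_zero_eq_constantCoeff]

theorem map_coeff_of_mk (c : ℕ → Matrix m m R) (k : ℕ) :
    (of fun i j => mk fun k => c k i j).map (coeff k) = c k := by
  ext i j
  simp only [map_apply, of_apply, coeff_mk]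

variable [Fintype m]

theorem map_coeff_mul (V W : Matrix m m R⟦X⟧) (k : ℕ) :
    (V * W).map (coeff k) = ∑ p ∈ antidiagonal k, V.map (coeff p.1) * W.map (coeff p.2) := by
  ext i j
  simp only [map_apply, mul_apply, map_sum, coeff_mul, sum_apply]
  exact sum_comm

theorem map_coeff_mul_map_C (V : Matrix m m R⟦X⟧) (M : Matrix m m R) (k : ℕ) :
    (V * M.map C).map (coeff k) = V.map (coeff k) * M := by
  ext i j
  simp only [map_apply, mul_apply, map_sum, coeff_mul_C]

end Matrix

theorem Matrix.isUnit_of_isUnit_map_constantCoeff {R : Type*} [CommRing R] {m : Type*}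
    [Fintype m] [DecidableEq m] {V : Matrix m m R⟦X⟧}
    (hV : IsUnit (V.map constantCoeff)) : IsUnit V := by
  rw [isUnit_iff_isUnit_det, isUnit_iff_constantCoeff, RingHom.map_det]
  exact (isUnit_iff_isUnit_det _).mp hV

section Recurrence

variable {R : Type*} [Ring R] [Algebra ℚ R]

theorem IsNilpotent.isUnit_natCast_add {N : R} (hN : IsNilpotent N) {k : ℕ} (hk : k ≠ 0) :
    IsUnit ((k : R) + N) := by
  have hk : IsUnit (k : R) := by
    rw [← map_natCast (algebraMap ℚ R)]
    exact (isUnit_iff_ne_zero.mpr (Nat.cast_ne_zero.mpr hk)).map _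
  exact hN.isUnit_add_left_of_commute hk (Nat.cast_commute k N).symm

noncomputable def shiftedAd (a : R) (k : ℕ) : Module.End ℚ R :=
  k + (LinearMap.mulLeft ℚ a - LinearMap.mulRight ℚ a)

theorem shiftedAd_apply (a x : R) (k : ℕ) : shiftedAd a k x = k • x + (a * x - x * a) := rfl

theorem isUnit_shiftedAd {a : R} (ha : IsNilpotent a) {k : ℕ} (hk : k ≠ 0) :
    IsUnit (shiftedAd a k) :=
  ((LinearMap.commute_mulLeft_right a a).isNilpotent_sub
    ((LinearMap.isNilpotent_mulLeft_iff ℚ a).mpr ha)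
    ((LinearMap.isNilpotent_mulRight_iff ℚ a).mpr ha)).isUnit_natCast_add hk

def IsRecurrenceSolution (h c : ℕ → R) : Prop :=
  ∀ k, shiftedAd (h 0) k (c k) + ∑ j ∈ range k, h (k - j) * c j = 0

noncomputable def recurrenceSolution (h : ℕ → R) : ℕ → R
  | 0 => 1
  | k + 1 => Ring.inverse (shiftedAd (h 0) (k + 1))
      (-∑ j : Fin (k + 1), h (k + 1 - j) * recurrenceSolution h j)

theorem isRecurrenceSolution_recurrenceSolution {h : ℕ → R} (hh : IsNilpotent (h 0)) :
    IsRecurrenceSolution h (recurrenceSolution h) := by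
  rintro (_ | k)
  · simp [recurrenceSolution, shiftedAd_apply]
  · rw [recurrenceSolution, ← Module.End.mul_apply,
      Ring.mul_inverse_cancel _ (isUnit_shiftedAd hh k.succ_ne_zero), Module.End.one_apply,
      Fin.sum_univ_eq_sum_range (fun j => h (k + 1 - j) * recurrenceSolution h j), neg_add_cancel]

theorem IsRecurrenceSolution.eq {h c d : ℕ → R} (hh : IsNilpotent (h 0))
    (hc : IsRecurrenceSolution h c) (hd : IsRecurrenceSolution h d) (h0 : c 0 = d 0) :
    c = d := by
  funext k
  induction k using Nat.strong_induction_on with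
  | _ k ih =>
    rcases Nat.eq_zero_or_pos k with rfl | hk
    · exact h0
    · have hsum : ∑ j ∈ range k, h (k - j) * c j = ∑ j ∈ range k, h (k - j) * d j :=
        sum_congr rfl fun j hj => by rw [ih j (mem_range.mp hj)]
      have := (hc k).trans (hd k).symm
      rw [hsum, add_left_inj] at this
      exact ((Module.End.isUnit_iff _).mp (isUnit_shiftedAd hh hk.ne')).injective this

end Recurrence

section MatrixEquation

variable {A : Type*} [CommRing A] [Algebra ℚ A] {m : Type*} [Fintype m] [DecidableEq m]

theorem solves_iff_isRecurrenceSolution (H V : Matrix m m A⟦X⟧) :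
    V.map (fun f => X * derivative A f) + H * V = V * (H.map constantCoeff).map C ↔
      IsRecurrenceSolution (fun k => H.map (coeff k)) (fun k => V.map (coeff k)) := by
  rw [Matrix.ext_iff_map_coeff]
  refine forall_congr' fun k => ?_
  have key : (V.map (fun f => X * derivative A f) + H * V).map (coeff k)
      - (V * (H.map constantCoeff).map C).map (coeff k)
      = shiftedAd (H.map (coeff 0)) k (V.map (coeff k))
        + ∑ j ∈ range k, H.map (coeff (k - j)) * V.map (coeff j) := by
    rw [Matrix.map_add _ (map_add _), Matrix.map_coeff_map_X_mul_derivative, Matrix.map_coeff_mul,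
      Finset.Nat.sum_antidiagonal_eq_add_sum_range (fun i j => H.map (coeff i) * V.map (coeff j)),
      Matrix.map_coeff_mul_map_C, shiftedAd_apply, Matrix.map_coeff_zero]
    abel
  rw [← sub_eq_zero, key]

theorem exists_solves {H : Matrix m m A⟦X⟧} (hH : IsNilpotent (H.map constantCoeff)) :
    ∃ U : Matrix m m A⟦X⟧, U.map constantCoeff = 1 ∧
      U.map (fun f => X * derivative A f) + H * U = U * (H.map constantCoeff).map C := by
  rw [← Matrix.map_coeff_zero] at hH
  refine ⟨.of fun i j => mk fun k => recurrenceSolution (fun k => H.map (coeff k)) k i j, ?_, ?_⟩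
  · rw [← Matrix.map_coeff_zero, Matrix.map_coeff_of_mk, recurrenceSolution]
  · rw [solves_iff_isRecurrenceSolution]
    simp only [Matrix.map_coeff_of_mk]
    exact isRecurrenceSolution_recurrenceSolution hH

theorem eq_of_solves {H V W : Matrix m m A⟦X⟧} (hH : IsNilpotent (H.map constantCoeff))
    (hV : V.map (fun f => X * derivative A f) + H * V = V * (H.map constantCoeff).map C)
    (hW : W.map (fun f => X * derivative A f) + H * W = W * (H.map constantCoeff).map C)
    (h0 : V.map constantCoeff = W.map constantCoeff) : V = W := by
  rw [← Matrix.map_coeff_zero] at hH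
  rw [solves_iff_isRecurrenceSolution] at hV hW
  rw [← Matrix.map_coeff_zero, ← Matrix.map_coeff_zero] at h0
  exact Matrix.ext_iff_map_coeff.mpr (congrFun (hV.eq hH hW h0))

end MatrixEquation

/-- Let `A` be a commutative ring containing `ℚ` and `H` an `n × n` matrix over
`A⟦x⟧` whose constant term `H₀ := H(0)` is nilpotent over `A`. Then there is a unique `n × n`
matrix `U` over `A⟦x⟧` with constant term the identity such that `x • U' + H * U = U * H₀`,
and moreover any such `U` is invertible. -/
theorem stmt1 (A : Type*) [CommRing A] [Algebra ℚ A] (n : ℕ)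
    (H : Matrix (Fin n) (Fin n) (PowerSeries A))
    (hH : IsNilpotent (H.map (PowerSeries.constantCoeff (R := A)))) :
    (∃! U : Matrix (Fin n) (Fin n) (PowerSeries A),
      U.map (PowerSeries.constantCoeff (R := A)) = 1 ∧
      U.map (fun f => PowerSeries.X * PowerSeries.derivative A f) + H * U
        = U * ((H.map (PowerSeries.constantCoeff (R := A))).map (PowerSeries.C (R := A)))) ∧
    (∀ U : Matrix (Fin n) (Fin n) (PowerSeries A),
      (U.map (PowerSeries.constantCoeff (R := A)) = 1 ∧
       U.map (fun f => PowerSeries.X * PowerSeries.derivative A f) + H * U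
        = U * ((H.map (PowerSeries.constantCoeff (R := A))).map (PowerSeries.C (R := A)))) →
      IsUnit U) := by
  obtain ⟨U, hU⟩ := exists_solves hH
  refine ⟨⟨U, hU, fun V hV => eq_of_solves hH hV.2 hU.2 (hV.1.trans hU.1.symm)⟩, ?_⟩
  exact fun V hV => Matrix.isUnit_of_isUnit_map_constantCoeff (hV.1 ▸ isUnit_one)
end

section
/- Let A be a commutative ring containing ℚ and let H₀ be a nilpotent n×n matrix over A. Define ∇ : A[[x]]ⁿ → A[[x]]ⁿ by ∇(v) = x·v′ + H₀·v, where v′ is the entrywise formal derivative. Then the set {v ∈ A[[x]]ⁿ : ∇^N(v) = 0 for some N ∈ ℕ} is exactly Aⁿ, the set of vectors all of whose entries are constant power series. -/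
/-!
On the `k`-th coefficients, `∇` acts as the constant matrix `k + H₀`, so the `k`-th coefficient
vector of `∇^N v` is `(k + H₀)^N` applied to that of `v`. For `k = 0` this is `H₀^N`, which vanishes
for large `N`; for `k ≠ 0` the integer `k` is a unit of the `ℚ`-algebra `A`, so `k + H₀` is a unit
plus a commuting nilpotent, hence invertible, and `∇^N v = 0` forces the `k`-th coefficients of `v`
to vanish.
-/

open PowerSeries Matrix

namespace PowerSeries

theorem coeff_X_mul_derivative_s2 {R : Type*} [CommSemiring R] (f : R⟦X⟧) (k : ℕ) :
    coeff k (X * derivative R f) = k * coeff k f := by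
  cases k with
  | zero => simp
  | succ m =>
    rw [coeff_succ_X_mul, coeff_derivative]
    push_cast
    ring

theorem coeff_map_C_mulVec {R ι : Type*} [CommSemiring R] [Fintype ι] (M : Matrix ι ι R)
    (v : ι → R⟦X⟧) (k : ℕ) (i : ι) :
    coeff k ((M.map C *ᵥ v) i) = (M *ᵥ (coeff k ∘ v)) i := by
  simp [mulVec, dotProduct, map_sum]

theorem mem_range_C_iff {R : Type*} [Semiring R] (f : R⟦X⟧) :
    f ∈ Set.range C ↔ ∀ k ≠ 0, coeff k f = 0 := by
  constructor
  · rintro ⟨a, rfl⟩ k hk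
    simp [coeff_C, hk]
  · intro h
    refine ⟨coeff 0 f, ext fun k => ?_⟩
    rcases eq_or_ne k 0 with rfl | hk
    · simp
    · simp [coeff_C, hk, h k hk]

end PowerSeries

theorem isUnit_natCast_add_of_isNilpotent {R : Type*} [Ring R] [Algebra ℚ R] {k : ℕ} (hk : k ≠ 0)
    {N : R} (hN : IsNilpotent N) : IsUnit ((k : R) + N) := by
  have hkR : IsUnit (k : R) := by
    simpa using (IsUnit.mk0 (k : ℚ) (Nat.cast_ne_zero.mpr hk)).map (algebraMap ℚ R)
  exact hN.isUnit_add_left_of_commute hkR (Nat.cast_commute k N).symm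

section EulerOperator

variable {A ι : Type*} [CommRing A] [Fintype ι] [DecidableEq ι] (H₀ : Matrix ι ι A)
  (D : (ι → A⟦X⟧) → (ι → A⟦X⟧))
  (hD : ∀ v i, D v i = X * derivative A (v i) + (H₀.map C *ᵥ v) i)
include hD

theorem coeff_comp_eq_mulVec (k : ℕ) (v : ι → A⟦X⟧) :
    coeff k ∘ D v = ((k : Matrix ι ι A) + H₀) *ᵥ (coeff k ∘ v) := by
  funext i
  simp only [Function.comp_apply, hD, map_add, coeff_X_mul_derivative_s2, coeff_map_C_mulVec,
    add_mulVec, natCast_mulVec, Pi.add_apply, Pi.smul_apply, smul_eq_mul]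

theorem coeff_comp_iterate_eq_pow_mulVec (k N : ℕ) (v : ι → A⟦X⟧) :
    coeff k ∘ D^[N] v = ((k : Matrix ι ι A) + H₀) ^ N *ᵥ (coeff k ∘ v) := by
  induction N with
  | zero => simp
  | succ N ih =>
    rw [Function.iterate_succ_apply', coeff_comp_eq_mulVec H₀ D hD, ih, mulVec_mulVec, pow_succ']

end EulerOperator

/-- Let `A` be a commutative ring containing `ℚ` and `H₀` a nilpotent `n × n`
matrix over `A`. Define `D : A⟦x⟧ⁿ → A⟦x⟧ⁿ` by `D v = x • v' + H₀ ⬝ v`. Then the set of vectors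
killed by some iterate of `D` is exactly the set of vectors with constant entries. -/
theorem stmt2 (A : Type*) [CommRing A] [Algebra ℚ A] (n : ℕ)
    (H₀ : Matrix (Fin n) (Fin n) A) (hH₀ : IsNilpotent H₀)
    (D : (Fin n → PowerSeries A) → (Fin n → PowerSeries A))
    (hD : ∀ (v : Fin n → PowerSeries A) (i : Fin n),
      D v i = PowerSeries.X * PowerSeries.derivative A (v i)
        + (H₀.map ((PowerSeries.C : A →+* PowerSeries A))).mulVec v i) :
    {v : Fin n → PowerSeries A | ∃ N : ℕ, D^[N] v = 0}
      = {v : Fin n → PowerSeries A | ∀ i, v i ∈ Set.range ((PowerSeries.C : A →+* PowerSeries A))} := by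
  ext v
  simp only [Set.mem_ofPred_eq, mem_range_C_iff]
  constructor
  · rintro ⟨N, hN⟩ i k hk
    have hcoeff := coeff_comp_iterate_eq_pow_mulVec H₀ D hD k N v
    rw [hN] at hcoeff
    have hunit := (isUnit_natCast_add_of_isNilpotent hk hH₀).pow N
    have hv : coeff k ∘ v = 0 :=
      mulVec_injective_of_isUnit hunit (by simp [← hcoeff])
    exact congrFun hv i
  · intro hv
    obtain ⟨N, hN⟩ := hH₀
    refine ⟨N, funext fun i => ext fun k => ?_⟩
    have hcoeff := congrFun (coeff_comp_iterate_eq_pow_mulVec H₀ D hD k N v) i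
    rcases eq_or_ne k 0 with rfl | hk
    · simpa [hN] using hcoeff
    · have hvk : coeff k ∘ v = 0 := funext fun j => hv j k hk
      simpa [hvk] using hcoeff
end

section
/- Let A be a commutative ring containing ℚ, let E be a finite free module over the formal power series ring A[[t]], and let ∇ : E → E be an additive map satisfying ∇(f·e) = f·∇(e) + f′·e for all f ∈ A[[t]] and e ∈ E, where f′ is the formal derivative. Then: (i) the natural A[[t]]-linear map A[[t]] ⊗_A ker(∇) → E is bijective; and (ii) the composite of the inclusion ker(∇) ⊆ E with the quotient map E → E/tE is an isomorphism of A-modules. -/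
/-!
Choose any basis `b` of `E` and let `Γ` be the matrix of `∇` in it. Because `A ⊇ ℚ`, the system
`y' + Γ y = 0` can be solved coefficient by coefficient for every initial value `y(0)`. The
solutions with initial values the standard basis vectors form a matrix with constant term `1`,
hence an invertible one, so they are the coordinates of a basis `c` of horizontal sections. In
that basis `∇` acts on coordinates as `d/dt`, whose kernel consists of the constants, so
`ker ∇ = ⨁ A • cᵢ`. Both claims follow: `c` is an `A⟦t⟧`-basis of `E`, and the images of the
`cᵢ` form an `A`-basis of `E / tE`.
-/

open PowerSeries Matrix

namespace PowerSeries

variable {A : Type*} [CommRing A] [Algebra ℚ A]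

theorem eq_C_constantCoeff_of_derivative_eq_zero {f : A⟦X⟧} (hf : d⁄dX A f = 0) :
    f = C (constantCoeff f) :=
  have : IsAddTorsionFree A := .of_module_rat A
  derivative.ext (by rw [hf, derivative_C]) (constantCoeff_C _).symm

variable {ι : Type*} [Fintype ι]

/-- The recursion `(n + 1) yₙ₊₁ = -∑_{k ≤ n} Γₙ₋ₖ yₖ` is `y' + Γ y = 0` read off coefficientwise. -/
noncomputable def linearODECoeff (Γ : Matrix ι ι A⟦X⟧) (a : ι → A) : ℕ → ι → A
  | 0 => a
  | n + 1 => fun j =>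
    -((n + 1 : ℚ)⁻¹ • ∑ i, ∑ k : Fin (n + 1), linearODECoeff Γ a k i * coeff (n - k) (Γ j i))

theorem exists_derivative_add_mulVec_eq_zero (Γ : Matrix ι ι A⟦X⟧) (a : ι → A) :
    ∃ y : ι → A⟦X⟧, (∀ j, d⁄dX A (y j) + (Γ *ᵥ y) j = 0) ∧ ∀ j, constantCoeff (y j) = a j := by
  set y : ι → A⟦X⟧ := fun i => mk fun n => linearODECoeff Γ a n i
  refine ⟨y, fun j => ?_, fun j => by simp [y, linearODECoeff]⟩
  ext n
  have hmulVec : coeff n ((Γ *ᵥ y) j)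
      = ∑ i, ∑ k : Fin (n + 1), linearODECoeff Γ a k i * coeff (n - k) (Γ j i) := by
    simp only [mulVec, dotProduct, map_sum]
    refine Finset.sum_congr rfl fun i _ => ?_
    rw [mul_comm, coeff_mul, Finset.Nat.sum_antidiagonal_eq_sum_range_succ_mk,
      ← Fin.sum_univ_eq_sum_range (fun k => coeff k (y i) * coeff (n - k) (Γ j i))]
    simp [y]
  rw [map_add, coeff_derivative, hmulVec, map_zero]
  simp only [y, coeff_mk, linearODECoeff]
  rw [mul_comm, ← Nat.cast_succ, ← nsmul_eq_mul, ← Nat.cast_smul_eq_nsmul ℚ, smul_neg, smul_smul,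
    Nat.cast_succ, mul_inv_cancel₀ (by positivity), one_smul, neg_add_cancel]

end PowerSeries

theorem LinearMap.bijective_liftBaseChange_of_basis {A R V E ι : Type*} [CommSemiring A]
    [CommSemiring R] [Algebra A R] [AddCommMonoid V] [Module A V] [AddCommMonoid E] [Module A E]
    [Module R E] [IsScalarTower A R E] (f : V →ₗ[A] E) (bV : Module.Basis ι A V)
    (c : Module.Basis ι R E) (h : ∀ i, f (bV i) = c i) :
    Function.Bijective (f.liftBaseChange R) := by
  have : f.liftBaseChange R = ((bV.baseChange R).equiv c (Equiv.refl ι)).toLinearMap :=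
    (bV.baseChange R).ext fun i => by
      rw [LinearEquiv.coe_coe, Module.Basis.equiv_apply, Equiv.refl_apply,
        Module.Basis.baseChange_apply, LinearMap.liftBaseChange_tmul, one_smul, h]
  rw [this]
  exact LinearEquiv.bijective _

namespace Module.Basis

variable {A E ι : Type*} [AddCommGroup E] [Fintype ι]

theorem repr_fintypeLinearCombination_apply {R : Type*} [CommSemiring A] [Semiring R]
    [Algebra A R] [Module R E] [Module A E] [IsScalarTower A R E]
    (c : Basis ι R E) (a : ι → A) (j : ι) :
    c.repr (Fintype.linearCombination A c a) j = algebraMap A R (a j) := by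
  classical
  rw [Fintype.linearCombination_apply, map_sum, Finsupp.coe_finsetSum, Finset.sum_apply]
  simp_rw [← algebraMap_smul R (a _) (c _), map_smul, c.repr_self]
  simp [Finsupp.single_apply, Algebra.smul_def]

variable [CommRing A] [Module A⟦X⟧ E]

theorem mem_range_X_smul_iff (c : Basis ι A⟦X⟧ E) (e : E) :
    e ∈ LinearMap.range ((X : A⟦X⟧) • LinearMap.id : E →ₗ[A⟦X⟧] E) ↔
      ∀ j, constantCoeff (c.repr e j) = 0 := by
  constructor
  · rintro ⟨u, rfl⟩ j
    simp
  · intro he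
    choose g hg using fun j => X_dvd_iff.mpr (he j)
    refine ⟨c.equivFun.symm g, c.equivFun.injective (funext fun j => ?_)⟩
    simp only [LinearMap.smul_apply, LinearMap.id_apply, map_smul, LinearEquiv.apply_symm_apply,
      Pi.smul_apply, smul_eq_mul, equivFun_apply, hg]

theorem bijective_mkQ_comp_fintypeLinearCombination [Module A E] [IsScalarTower A A⟦X⟧ E]
    (c : Basis ι A⟦X⟧ E) :
    Function.Bijective
      (((LinearMap.range ((X : A⟦X⟧) • LinearMap.id : E →ₗ[A⟦X⟧] E)).restrictScalars A).mkQ.comp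
        (Fintype.linearCombination A c)) := by
  refine ⟨(injective_iff_map_eq_zero _).2 fun a ha => funext fun j => ?_, fun q => ?_⟩
  · simp only [LinearMap.comp_apply, Submodule.mkQ_apply, Submodule.Quotient.mk_eq_zero,
      Submodule.restrictScalars_mem, c.mem_range_X_smul_iff,
      c.repr_fintypeLinearCombination_apply] at ha
    simpa using ha j
  · obtain ⟨e, rfl⟩ := Submodule.mkQ_surjective _ q
    refine ⟨fun j => constantCoeff (c.repr e j), ?_⟩
    simp [Submodule.Quotient.eq, c.mem_range_X_smul_iff, c.repr_fintypeLinearCombination_apply]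

end Module.Basis

section Connection

variable (A : Type*) {E : Type*} [CommRing A] [AddCommGroup E] [Module A⟦X⟧ E]

def IsConnection (D : E →+ E) : Prop :=
  ∀ (f : A⟦X⟧) (e : E), D (f • e) = f • D e + d⁄dX A f • e

variable {A} {D : E →+ E} (hD : IsConnection A D)
include hD

theorem IsConnection.repr_map_apply {ι : Type*} [Fintype ι] (b : Module.Basis ι A⟦X⟧ E)
    (e : E) (j : ι) :
    b.repr (D e) j = d⁄dX A (b.repr e j) + ∑ i, b.repr (D (b i)) j * b.repr e i := by
  classical
  have hDe : D e = ∑ i, (b.repr e i • D (b i) + d⁄dX A (b.repr e i) • b i) := by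
    conv_lhs => rw [← b.sum_repr e, map_sum]
    exact Finset.sum_congr rfl fun i _ => hD _ _
  simp [hDe, Finset.sum_add_distrib, Finsupp.single_apply, mul_comm, add_comm]

theorem IsConnection.exists_basis_map_eq_zero [Algebra ℚ A] {ι : Type*} [Fintype ι]
    (b : Module.Basis ι A⟦X⟧ E) : ∃ c : Module.Basis ι A⟦X⟧ E, ∀ i, D (c i) = 0 := by
  classical
  choose y hy hy0 using fun i => exists_derivative_add_mulVec_eq_zero
    (Matrix.of fun j k => b.repr (D (b k)) j) (Pi.single i 1)
  let M : Matrix ι ι A⟦X⟧ := Matrix.of fun j i => y i j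
  have hM : IsUnit M.det := by
    have hM0 : (constantCoeff : A⟦X⟧ →+* A).mapMatrix M = 1 := by
      ext j i
      simp [M, hy0, Pi.single_apply, Matrix.one_apply]
    rw [isUnit_iff_constantCoeff, RingHom.map_det, hM0, det_one]
    exact isUnit_one
  refine ⟨b.map (M.toLinearEquiv b hM), fun i =>
    b.repr.map_eq_zero_iff.mp (Finsupp.ext fun j => ?_)⟩
  have hrepr : ∀ j, b.repr (b.map (M.toLinearEquiv b hM) i) j = y i j := by
    intro j
    rw [b.map_apply, toLinearEquiv_apply, toLin_self]
    simp only [map_sum, map_smul, Finsupp.coe_finsetSum, Finset.sum_apply, Finsupp.smul_apply,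
      b.repr_self, Finsupp.single_apply, smul_eq_mul, mul_ite, mul_one, mul_zero,
      Finset.sum_ite_eq', Finset.mem_univ, if_true, M, of_apply]
  rw [hD.repr_map_apply b, Finsupp.coe_zero, Pi.zero_apply]
  simpa only [hrepr, mulVec, dotProduct, of_apply] using hy i j

variable [Module A E] [IsScalarTower A A⟦X⟧ E]

theorem IsConnection.map_smul (a : A) (e : E) : D (a • e) = a • D e := by
  have hC : d⁄dX A (algebraMap A A⟦X⟧ a) = 0 := by simp
  rw [algebra_compatible_smul A⟦X⟧, hD, hC, zero_smul, add_zero, ← algebra_compatible_smul]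

def IsConnection.toLinearMap : E →ₗ[A] E where
  toFun := D
  map_add' := D.map_add
  map_smul' := hD.map_smul

theorem IsConnection.range_fintypeLinearCombination_eq_ker [Algebra ℚ A] {ι : Type*} [Fintype ι]
    (c : Module.Basis ι A⟦X⟧ E) (hc : ∀ i, D (c i) = 0) :
    LinearMap.range (Fintype.linearCombination A c) = LinearMap.ker hD.toLinearMap := by
  ext e
  constructor
  · rintro ⟨a, rfl⟩
    simp [IsConnection.toLinearMap, Fintype.linearCombination_apply, hc]
  · intro (he : D e = 0)
    refine ⟨fun j => constantCoeff (c.repr e j), c.repr.injective (Finsupp.ext fun j => ?_)⟩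
    have hderiv : d⁄dX A (c.repr e j) = 0 := by
      simpa [he, hc] using (hD.repr_map_apply c e j).symm
    rw [c.repr_fintypeLinearCombination_apply, PowerSeries.algebraMap_apply,
      Algebra.algebraMap_self, RingHom.id_apply, ← eq_C_constantCoeff_of_derivative_eq_zero hderiv]

end Connection

/-- Let `A` be a commutative ring containing `ℚ`, `E` a finite free module
over `A⟦t⟧`, and `D : E → E` an additive map satisfying the Leibniz rule
`D (f • e) = f • D e + f' • e`. Then the kernel of `D` is an `A`-submodule `V` of `E` such
that (i) the natural `A⟦t⟧`-linear map `A⟦t⟧ ⊗[A] V → E` is bijective, and (ii) the composite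
of the inclusion `V ⊆ E` with the quotient map `E → E/tE` is an isomorphism of `A`-modules. -/
theorem stmt7 (A : Type*) [CommRing A] [Algebra ℚ A]
    (E : Type*) [AddCommGroup E] [Module (PowerSeries A) E]
    [Module A E] [IsScalarTower A (PowerSeries A) E]
    [Module.Finite (PowerSeries A) E] [Module.Free (PowerSeries A) E]
    (D : E →+ E)
    (hD : ∀ (f : PowerSeries A) (e : E),
      D (f • e) = f • D e + (PowerSeries.derivative A f) • e) :
    ∃ V : Submodule A E,
      (V : Set E) = {e : E | D e = 0} ∧
      Function.Bijective (LinearMap.liftBaseChange (PowerSeries A) V.subtype) ∧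
      Function.Bijective
        (((LinearMap.range ((PowerSeries.X : PowerSeries A) •
            (LinearMap.id : E →ₗ[PowerSeries A] E))).restrictScalars A).mkQ.comp
          V.subtype) := by
  have hD : IsConnection A D := hD
  obtain ⟨c, hc⟩ := hD.exists_basis_map_eq_zero (Module.Free.chooseBasis A⟦X⟧ E)
  have hκ := c.bijective_mkQ_comp_fintypeLinearCombination (A := A)
  have hinj : Function.Injective (Fintype.linearCombination A c) :=
    fun a b hab => hκ.1 (congrArg (Submodule.mkQ _) hab)
  -- `ψ a = ∑ aᵢ • cᵢ`, an isomorphism onto the horizontal sections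
  let ψ := (LinearEquiv.ofInjective _ hinj).trans
    (LinearEquiv.ofEq _ _ (hD.range_fintypeLinearCombination_eq_ker c hc))
  refine ⟨LinearMap.ker hD.toLinearMap, rfl, ?_, ?_⟩
  · refine LinearMap.bijective_liftBaseChange_of_basis _ ((Pi.basisFun A _).map ψ) c fun i => ?_
    simp [ψ]
  · have hψ : (LinearMap.ker hD.toLinearMap).subtype = Fintype.linearCombination A c ∘ₗ ψ.symm :=
      LinearMap.ext fun v => by
        conv_lhs => rw [← ψ.apply_symm_apply v]
        rfl
    rw [hψ, ← LinearMap.comp_assoc]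
    exact hκ.comp ψ.symm.bijective
end

section
/- Let A be a commutative ring containing ℚ, let S = A[[x,y]], and let θ : S → S be the A-linear operator with θ(x^i y^j) = (i−j)·x^i y^j. Let M be an n×n matrix over S each of whose entries is supported on diagonal monomials (coefficient of x^i y^j zero whenever i ≠ j) and whose constant term M₀ := M(0,0) is a strictly upper triangular matrix over A. Define ∇ : Sⁿ → Sⁿ by ∇(v) = θ(v) + M·v, with θ applied entrywise. Then for v ∈ Sⁿ the following are equivalent: (i) for every m ∈ ℕ there exists N ∈ ℕ such that every entry of ∇^N(v) has vanishing coefficient of x^i y^j whenever i + j < m (i.e., ∇^N(v) → 0 in the (x,y)-adic topology); (ii) every entry of v is supported on diagonal monomials. -/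
/-! Give `x^i y^j` the weight `i - j`. The entries of `M` have weight `0`, so `∇` preserves
every weight, and on the lowest-degree coefficients of weight `k` it acts as the matrix
`k • 1 + M(0,0)`, where `M(0,0)` is nilpotent. For `k ≠ 0` this matrix is invertible (`k` is a
unit since `ℚ ⊆ A`), so by induction on the degree the weight-`k` coefficients of `v` must
vanish if `∇^N v → 0`. For `k = 0` it is nilpotent, so if `v` is diagonal every `n` further
steps of `∇` raise the order of `∇^N v` by one. -/

/-- The `A`-linear operator `θ = x·∂/∂x − y·∂/∂y` on `A⟦x,y⟧`, determined on monomials by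
`θ(x^i y^j) = (i − j) · x^i y^j`. -/
noncomputable def theta {A : Type*} [CommRing A] (f : MvPowerSeries (Fin 2) A) :
    MvPowerSeries (Fin 2) A :=
  fun d => (((d 0 : ℤ) - (d 1 : ℤ) : ℤ) : A) * MvPowerSeries.coeff d f

open MvPowerSeries Matrix Finset.HasAntidiagonal

namespace Matrix

theorem pow_apply_eq_zero_of_strictUpper {R : Type*} [Semiring R] {n : ℕ}
    {B : Matrix (Fin n) (Fin n) R} (hB : ∀ i j, j ≤ i → B i j = 0) (s : ℕ) {i j : Fin n}
    (hij : (j : ℕ) < i + s) : (B ^ s) i j = 0 := by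
  induction s generalizing j with
  | zero => exact one_apply_ne (by rintro rfl; omega)
  | succ s ih =>
    rw [pow_succ, mul_apply]
    refine Finset.sum_eq_zero fun k _ => ?_
    by_cases hk : (k : ℕ) < i + s
    · rw [ih hk, zero_mul]
    · rw [hB k j (by rw [Fin.le_def]; omega), mul_zero]

theorem pow_eq_zero_of_strictUpper {R : Type*} [Semiring R] {n : ℕ}
    {B : Matrix (Fin n) (Fin n) R} (hB : ∀ i j, j ≤ i → B i j = 0) : B ^ n = 0 := by
  ext i j
  exact pow_apply_eq_zero_of_strictUpper hB n (by omega)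

end Matrix

section Nabla

variable {A : Type*} [CommRing A] {ι : Type*}

theorem coeff_theta (d : Fin 2 →₀ ℕ) (f : MvPowerSeries (Fin 2) A) :
    coeff d (theta f) = (((d 0 : ℤ) - d 1 : ℤ) : A) * coeff d f :=
  rfl

def VanishesOn (P : (Fin 2 →₀ ℕ) → Prop) (w : ι → MvPowerSeries (Fin 2) A) : Prop :=
  ∀ i d, P d → coeff d (w i) = 0

theorem VanishesOn.mono {P Q : (Fin 2 →₀ ℕ) → Prop} {w : ι → MvPowerSeries (Fin 2) A}
    (h : VanishesOn P w) (hQP : ∀ d, Q d → P d) : VanishesOn Q w :=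
  fun i d hd => h i d (hQP d hd)

variable [Fintype ι]

noncomputable def nabla (M : Matrix ι ι (MvPowerSeries (Fin 2) A))
    (v : ι → MvPowerSeries (Fin 2) A) : ι → MvPowerSeries (Fin 2) A :=
  fun i => theta (v i) + (M *ᵥ v) i

variable {M : Matrix ι ι (MvPowerSeries (Fin 2) A)}

theorem coeff_nabla (w : ι → MvPowerSeries (Fin 2) A) (i : ι) (d : Fin 2 →₀ ℕ) :
    coeff d (nabla M w i) = (((d 0 : ℤ) - d 1 : ℤ) : A) * coeff d (w i) +
      ∑ j, ∑ p ∈ antidiagonal d, coeff p.1 (M i j) * coeff p.2 (w j) := by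
  simp only [nabla, map_add, coeff_theta, mulVec, dotProduct, map_sum, coeff_mul]

theorem vanishesOn_nabla (hM : ∀ i j d, d 0 ≠ d 1 → coeff d (M i j) = 0)
    {P : (Fin 2 →₀ ℕ) → Prop} (hP : ∀ p q : Fin 2 →₀ ℕ, p 0 = p 1 → P (p + q) → P q)
    {w : ι → MvPowerSeries (Fin 2) A} (hw : VanishesOn P w) : VanishesOn P (nabla M w) := by
  intro i d hd
  rw [coeff_nabla, hw i d hd, mul_zero, zero_add]
  refine Finset.sum_eq_zero fun j _ => Finset.sum_eq_zero fun ⟨p, q⟩ hpq => ?_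
  obtain rfl : p + q = d := mem_antidiagonal.mp hpq
  by_cases hp : p 0 = p 1
  · rw [hw j q (hP p q hp hd), mul_zero]
  · rw [hM i j p hp, zero_mul]

theorem vanishesOn_iterate_nabla (hM : ∀ i j d, d 0 ≠ d 1 → coeff d (M i j) = 0)
    {P : (Fin 2 →₀ ℕ) → Prop} (hP : ∀ p q : Fin 2 →₀ ℕ, p 0 = p 1 → P (p + q) → P q)
    {w : ι → MvPowerSeries (Fin 2) A} (hw : VanishesOn P w) (N : ℕ) :
    VanishesOn P ((nabla M)^[N] w) := by
  induction N with
  | zero => exact hw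
  | succ N ih => rw [Function.iterate_succ_apply']; exact vanishesOn_nabla hM hP ih

end Nabla

section LeadingCoefficients

variable {A : Type*} [CommRing A] {ι : Type*} [Fintype ι] [DecidableEq ι]
  {M : Matrix ι ι (MvPowerSeries (Fin 2) A)}

theorem comp_nabla_of_vanishesOn (hM : ∀ i j d, d 0 ≠ d 1 → coeff d (M i j) = 0)
    {k : ℤ} {d : Fin 2 →₀ ℕ} (hdk : (d 0 : ℤ) - d 1 = k) {w : ι → MvPowerSeries (Fin 2) A}
    (hw : VanishesOn (fun e => (e 0 : ℤ) - e 1 = k ∧ e 0 + e 1 < d 0 + d 1) w) :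
    coeff d ∘ nabla M w = ((k : A) • 1 + M.map constantCoeff) *ᵥ (coeff d ∘ w) := by
  funext i
  rw [add_mulVec, smul_mulVec, one_mulVec, Function.comp_apply, coeff_nabla, hdk]
  simp only [Pi.add_apply, Pi.smul_apply, smul_eq_mul, mulVec, dotProduct, map_apply]
  congr 1
  refine Finset.sum_congr rfl fun j _ => ?_
  rw [Finset.sum_eq_single (0, d)]
  · rw [coeff_zero_eq_constantCoeff_apply]
    rfl
  · rintro ⟨p, q⟩ hpq hne
    obtain rfl : p + q = d := mem_antidiagonal.mp hpq
    by_cases hp : p 0 = p 1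
    · have hp0 : p 0 ≠ 0 := fun h0 => hne <| by
        obtain rfl : p = 0 := Finsupp.ext (Fin.forall_fin_two.2 ⟨h0, by rw [Finsupp.zero_apply]; omega⟩)
        rw [zero_add]
      refine mul_eq_zero_of_right _ (hw j q ⟨?_, ?_⟩) <;>
        simp only [Finsupp.add_apply, Nat.cast_add] at hdk ⊢ <;> omega
    · rw [hM i j p hp, zero_mul]
  · exact fun h => (h (mem_antidiagonal.mpr (zero_add d))).elim

theorem comp_iterate_nabla_of_vanishesOn (hM : ∀ i j d, d 0 ≠ d 1 → coeff d (M i j) = 0)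
    {k : ℤ} {d : Fin 2 →₀ ℕ} (hdk : (d 0 : ℤ) - d 1 = k) {w : ι → MvPowerSeries (Fin 2) A}
    (hw : VanishesOn (fun e => (e 0 : ℤ) - e 1 = k ∧ e 0 + e 1 < d 0 + d 1) w) (N : ℕ) :
    coeff d ∘ (nabla M)^[N] w = ((k : A) • 1 + M.map constantCoeff) ^ N *ᵥ (coeff d ∘ w) := by
  induction N with
  | zero => simp
  | succ N ih =>
    have hslice := vanishesOn_iterate_nabla hM (fun p q hp h => by
      simp only [Finsupp.add_apply, Nat.cast_add] at h; omega) hw N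
    rw [Function.iterate_succ_apply', comp_nabla_of_vanishesOn hM hdk hslice, ih,
      mulVec_mulVec, pow_succ']

theorem isUnit_intCast_smul_one_add [Algebra ℚ A] {k : ℤ} (hk : k ≠ 0) {B : Matrix ι ι A}
    (hB : IsNilpotent B) : IsUnit ((k : A) • 1 + B) := by
  have hkA : IsUnit (k : A) := by
    simpa using (isUnit_iff_ne_zero.2 (Int.cast_ne_zero.2 hk : (k : ℚ) ≠ 0)).map (algebraMap ℚ A)
  rw [← Algebra.algebraMap_eq_smul_one]
  exact hB.isUnit_add_left_of_commute (hkA.map _) (Algebra.commutes _ _).symm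

theorem vanishesOn_lowDegree_iterate_nabla (hM : ∀ i j d, d 0 ≠ d 1 → coeff d (M i j) = 0)
    {N : ℕ} (hnil : M.map constantCoeff ^ N = 0) {v : ι → MvPowerSeries (Fin 2) A}
    (hv : VanishesOn (fun d => d 0 ≠ d 1) v) (m : ℕ) :
    VanishesOn (fun d => d 0 + d 1 < m) ((nabla M)^[N * m] v) := by
  induction m with
  | zero => exact fun i d hd => absurd hd (Nat.not_lt_zero _)
  | succ m ih =>
    have hiter : (nabla M)^[N * (m + 1)] v = (nabla M)^[N] ((nabla M)^[N * m] v) := by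
      rw [← Function.iterate_add_apply, Nat.mul_succ, add_comm]
    intro i d hd
    by_cases hlt : d 0 + d 1 < m
    · rw [hiter]
      exact vanishesOn_iterate_nabla hM (fun p q _ h => by
        simp only [Finsupp.add_apply] at h; omega) ih N i d hlt
    by_cases hdiag : d 0 = d 1
    · have hlead := comp_iterate_nabla_of_vanishesOn hM (k := 0) (d := d) (by omega)
        (ih.mono fun e he => by omega) N
      rw [hiter]
      simpa [hnil] using congrFun hlead i
    · exact vanishesOn_iterate_nabla hM (fun p q hp h => by
        simp only [Finsupp.add_apply] at h; omega) hv _ i d hdiag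

theorem vanishesOn_offDiag_of_iterate_nabla [Algebra ℚ A]
    (hM : ∀ i j d, d 0 ≠ d 1 → coeff d (M i j) = 0) (hnil : IsNilpotent (M.map constantCoeff))
    {v : ι → MvPowerSeries (Fin 2) A}
    (h : ∀ m, ∃ N, VanishesOn (fun d => d 0 + d 1 < m) ((nabla M)^[N] v)) :
    VanishesOn (fun d => d 0 ≠ d 1) v := by
  suffices hslice : ∀ k : ℤ, k ≠ 0 → ∀ r,
      VanishesOn (fun e => (e 0 : ℤ) - e 1 = k ∧ e 0 + e 1 < r) v from
    fun i d hd => hslice _ (by omega) (d 0 + d 1 + 1) i d ⟨rfl, by omega⟩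
  intro k hk r
  induction r with
  | zero => exact fun i d hd => absurd hd.2 (Nat.not_lt_zero _)
  | succ r ih =>
    rintro i d ⟨hdk, hdr⟩
    by_cases hlt : d 0 + d 1 < r
    · exact ih i d ⟨hdk, hlt⟩
    obtain rfl : d 0 + d 1 = r := by omega
    obtain ⟨N, hN⟩ := h (d 0 + d 1 + 1)
    have hunit := (isUnit_intCast_smul_one_add hk hnil).pow N
    have hzero : coeff d ∘ v = 0 := mulVec_injective_of_isUnit hunit <| by
      rw [← comp_iterate_nabla_of_vanishesOn hM hdk ih N, mulVec_zero]
      funext j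
      exact hN j d (by omega)
    exact congrFun hzero i

end LeadingCoefficients

/-- Let `A` be a commutative ring containing `ℚ`, `S = A⟦x,y⟧`, and `M` an
`n × n` matrix over `S` whose entries are supported on diagonal monomials and whose constant
term is strictly upper triangular over `A`. Define `D v = θ(v) + M ⬝ v` on `Sⁿ`. Then for
`v ∈ Sⁿ` the following are equivalent: (i) `D^[N] v → 0` in the `(x,y)`-adic topology, i.e. for
every `m` there is `N` such that all coefficients of `D^[N] v` in total degree `< m` vanish;
(ii) every entry of `v` is supported on diagonal monomials. -/
theorem stmt9 (A : Type*) [CommRing A] [Algebra ℚ A] (n : ℕ)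
    (M : Matrix (Fin n) (Fin n) (MvPowerSeries (Fin 2) A))
    (hdiag : ∀ (i j : Fin n) (d : Fin 2 →₀ ℕ), d 0 ≠ d 1 →
      MvPowerSeries.coeff d (M i j) = 0)
    (hupper : ∀ i j : Fin n, j ≤ i →
      MvPowerSeries.constantCoeff (M i j) = 0)
    (D : (Fin n → MvPowerSeries (Fin 2) A) → (Fin n → MvPowerSeries (Fin 2) A))
    (hD : ∀ (v : Fin n → MvPowerSeries (Fin 2) A) (i : Fin n),
      D v i = theta (v i) + M.mulVec v i)
    (v : Fin n → MvPowerSeries (Fin 2) A) :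
    (∀ m : ℕ, ∃ N : ℕ, ∀ (i : Fin n) (d : Fin 2 →₀ ℕ), d 0 + d 1 < m →
        MvPowerSeries.coeff d (D^[N] v i) = 0) ↔
    (∀ (i : Fin n) (d : Fin 2 →₀ ℕ), d 0 ≠ d 1 →
        MvPowerSeries.coeff d (v i) = 0) := by
  obtain rfl : D = nabla M := funext fun w => funext (hD w)
  have hnil : M.map constantCoeff ^ n = 0 := pow_eq_zero_of_strictUpper hupper
  exact ⟨vanishesOn_offDiag_of_iterate_nabla hdiag ⟨n, hnil⟩,
    fun hv m => ⟨n * m, vanishesOn_lowDegree_iterate_nabla hdiag hnil hv m⟩⟩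
end

section
/- Let B be a commutative ring that is reduced and Jacobson, and let ρ be an r×r matrix over B such that for every maximal ideal 𝔪 of B, the image of ρ under entrywise reduction modulo 𝔪 is a nilpotent matrix over the field B/𝔪. Then ρ^r = 0. -/
open Polynomial in
lemma aux_red_nilp {K : Type*} [CommRing K] [IsReduced K] {r : ℕ}
    (M : Matrix (Fin r) (Fin r) K) (hM : IsNilpotent M) : M ^ r = 0 := by
  have h1 : IsNilpotent (M.charpoly - X ^ (Fintype.card (Fin r))) :=
    Matrix.isNilpotent_charpoly_sub_pow_of_isNilpotent hM
  have h1' : M.charpoly - X ^ (Fintype.card (Fin r)) = 0 := by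
    rw [Polynomial.isNilpotent_iff] at h1
    ext i
    simpa using (h1 i).eq_zero
  have h2 : M.charpoly = X ^ r := by
    rw [sub_eq_zero, Fintype.card_fin] at h1'
    exact h1'
  have := Matrix.aeval_self_charpoly M
  rw [h2] at this
  simpa using this

/-- Let `B` be a reduced Jacobson commutative ring and `ρ` an `r × r` matrix
over `B` whose reduction modulo every maximal ideal `𝔪` is nilpotent over the field `B/𝔪`.
Then `ρ ^ r = 0`. -/
theorem stmt10 (B : Type*) [CommRing B] [IsReduced B] [IsJacobsonRing B]
    (r : ℕ) (ρ : Matrix (Fin r) (Fin r) B)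
    (h : ∀ m : Ideal B, m.IsMaximal → IsNilpotent (ρ.map (Ideal.Quotient.mk m))) :
    ρ ^ r = 0 := by
  have key : ∀ i j, (ρ ^ r) i j ∈ ((⊥ : Ideal B).jacobson) := by
    intro i j
    rw [Ideal.jacobson, Ideal.mem_sInf]
    rintro J ⟨-, hJ⟩
    haveI := hJ
    haveI : IsReduced (B ⧸ J) := by
      haveI : J.IsPrime := hJ.isPrime
      infer_instance
    have hmap : (ρ.map (Ideal.Quotient.mk J)) ^ r = 0 := aux_red_nilp _ (h J hJ)
    have h0 : (ρ ^ r).map (Ideal.Quotient.mk J) = 0 := by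
      have := map_pow ((Ideal.Quotient.mk J).mapMatrix) ρ r
      simp only [RingHom.mapMatrix_apply] at this
      rw [this, hmap]
    have := congrFun (congrFun h0 i) j
    simpa [Ideal.Quotient.eq_zero_iff_mem] using this
  have hjac : ((⊥ : Ideal B).jacobson) = ⊥ := by
    rw [← Ideal.radical_eq_jacobson]
    exact nilradical_eq_zero B
  ext i j
  have := key i j
  rw [hjac, Ideal.mem_bot] at this
  simpa using this
end

section
/- Let R be a commutative ring and let M be a free R-module with a basis (b_i)_{i∈ι}. Fix an index i₀ and let e denote the image of b_{i₀} under the canonical inclusion of M into the exterior algebra Λ(M). Then for every ω ∈ Λ(M), one has e∧ω = 0 if and only if there exists η ∈ Λ(M) with ω = e∧η; equivalently, the kernel of left exterior multiplication by e on Λ(M) equals its image. -/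
/-! Pick a functional `d` with `d e = 1` (here the coordinate of `b i₀`). Contraction `ι_d` by `d` is
an antiderivation, so `ι_d (e ∧ ω) = ω - e ∧ ι_d ω`; when `e ∧ ω = 0` this exhibits
`ω = e ∧ ι_d ω`. The converse is `e ∧ e = 0`. -/

namespace ExteriorAlgebra

variable {R M : Type*} [CommRing R] [AddCommGroup M] [Module R M]

theorem eq_ι_mul_contractLeft_of_ι_mul_eq_zero {m : M} {d : Module.Dual R M} (hd : d m = 1)
    {ω : ExteriorAlgebra R M} (h : ι R m * ω = 0) :
    ω = ι R m * CliffordAlgebra.contractLeft (Q := 0) d ω := by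
  have key := CliffordAlgebra.contractLeft_ι_mul (Q := (0 : QuadraticForm R M)) (d := d) m ω
  rw [show CliffordAlgebra.ι (0 : QuadraticForm R M) = ι R from rfl, h, map_zero, hd,
    one_smul] at key
  exact sub_eq_zero.mp key.symm

theorem ι_mul_eq_zero_iff_exists_eq_ι_mul {m : M} {d : Module.Dual R M} (hd : d m = 1)
    (ω : ExteriorAlgebra R M) : ι R m * ω = 0 ↔ ∃ η, ω = ι R m * η := by
  refine ⟨fun h ↦ ⟨_, eq_ι_mul_contractLeft_of_ι_mul_eq_zero hd h⟩, ?_⟩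
  rintro ⟨η, rfl⟩
  rw [← mul_assoc, ι_sq_zero, zero_mul]

end ExteriorAlgebra

/-- Let `R` be a commutative ring and `M` a free `R`-module with basis
`(bᵢ)`. Let `e` be the image in the exterior algebra `Λ(M)` of a basis vector `b i₀`. Then for
every `ω ∈ Λ(M)`, `e ∧ ω = 0` iff `ω = e ∧ η` for some `η`; i.e. the kernel of left exterior
multiplication by `e` equals its image. -/
theorem stmt12 (R : Type*) [CommRing R] (M : Type*) [AddCommGroup M] [Module R M]
    (ι : Type*) (b : Module.Basis ι R M) (i₀ : ι) (ω : ExteriorAlgebra R M) :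
    ExteriorAlgebra.ι R (b i₀) * ω = 0 ↔
      ∃ η : ExteriorAlgebra R M, ω = ExteriorAlgebra.ι R (b i₀) * η :=
  ExteriorAlgebra.ι_mul_eq_zero_iff_exists_eq_ι_mul (d := b.coord i₀) (by simp) ω
end
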